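/- Let T ∈ BPT(n), rooted as described, and let v be an internal vertex with two internal children v₁ and v₂. Then for every s ≥ 1: R(v,s,0) = ∑_{s₁=0}^{s−2} (∑_{k₁ ≥ 0} R(v₁,s₁,k₁)) · (∑_{k₂ ≥ 0} R(v₂, s−2−s₁, k₂)), where an empty sum equals zero. -/

import Mathlib

open scoped Classical

noncomputable section

/-- `b n = (2n-5)!!`, the number of fully resolved phylogenetic trees on `n` leaves. -/
def numBPT (n : ℕ) : ℕ := ∏ k ∈ Finset.Icc 3 n, (2 * k - 5)

/-- `β m = b (m+3)`, the number of fully resolved phylogenetic trees with exactly `m`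
internal edges. -/
def beta (m : ℕ) : ℕ := numBPT (m + 3)

/-- A rooted binary tree with leaves labelled by `α`: every internal vertex has exactly
two children.  This is the structure obtained from a fully resolved phylogenetic tree
`T ∈ BPT(n)` by deleting leaf `n` and rooting at the vertex `v₀` that was adjacent to
leaf `n`. -/
inductive RTree (α : Type) : Type
  | leaf (a : α) : RTree α
  | node (l r : RTree α) : RTree α

namespace RTree

variable {α : Type}

/-- `t` is an internal vertex (not a leaf). -/
def isNode : RTree α → Prop
  | leaf _ => False
  | node _ _ => True

/-- The multiset of leaf labels of `t`. -/
def labels : RTree α → Multiset α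
  | leaf a => {a}
  | node l r => labels l + labels r

/-- The subtree `T_v` consisting of a vertex `v` (addressed by the path `p` of
left/right choices from the root) and all of its descendants. -/
def subtreeAt : RTree α → List Bool → Option (RTree α)
  | t, [] => some t
  | leaf _, _ :: _ => none
  | node l r, b :: p => subtreeAt (if b then r else l) p

/-- The set of vertices of `t`, addressed by paths from the root. -/
def positions : RTree α → Finset (List Bool)
  | leaf _ => {[]}
  | node l r =>
      insert [] (((positions l).image (List.cons false)) ∪ ((positions r).image (List.cons true)))

/-- `E̊(t)`: the internal edges of the rooted tree, i.e. the edges both of whose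
endpoints are internal vertices.  An edge is addressed by the position of its lower
(child) endpoint, which must be a non-root internal vertex (its parent is automatically
internal). -/
def internalEdges (t : RTree α) : Finset (List Bool) :=
  (positions t).filter (fun p => p ≠ [] ∧ ∃ t', subtreeAt t p = some t' ∧ t'.isNode)

/-- One step of adjacency in the forest `t - E`: vertices `p` and `q` are joined by an
edge of the tree (one is the parent of the other) that has not been cut (is not in `E`). -/
def stepRel (E : Finset (List Bool)) (p q : List Bool) : Prop :=
  (q = p.dropLast ∧ p ≠ [] ∧ p ∉ E) ∨ (p = q.dropLast ∧ q ≠ [] ∧ q ∉ E)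

/-- The connected component of the forest `t - E` containing the vertex `p`. -/
def component (t : RTree α) (E : Finset (List Bool)) (p : List Bool) : Finset (List Bool) :=
  (positions t).filter (fun q => Relation.ReflTransGen (stepRel E) p q)

/-- The set of connected components `F₁, …, F_{|E|+1}` of the forest `t - E`. -/
def components (t : RTree α) (E : Finset (List Bool)) : Finset (Finset (List Bool)) :=
  (positions t).image (component t E)

/-- `|E̊(F)|`: the number of internal edges of the tree contained in (i.e. with both
endpoints in) the component `C` of the forest `t - E`. -/
def compEdgeCount (t : RTree α) (E : Finset (List Bool)) (C : Finset (List Bool)) : ℕ :=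
  ((internalEdges t).filter (fun p => p ∉ E ∧ p ∈ C)).card

/-- `N_E(T_v) = ∏ᵢ β(|E̊(Fᵢ)|)`, the product over the components of `T_v - E`. -/
def NEdges (t : RTree α) (E : Finset (List Bool)) : ℕ :=
  ∏ C ∈ components t E, beta (compEdgeCount t E C)

/-- `κ(v,E)`: the number of internal edges in the component of `T_v - E` containing
the root `v` of `T_v`. -/
def kappa (t : RTree α) (E : Finset (List Bool)) : ℕ :=
  compEdgeCount t E (component t E [])

/-- `R(v,s,k) = ∑_{E ⊆ E̊(T_v), |E| = s, κ(v,E) = k} N_E(T_v)`. -/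
def R (t : RTree α) (s k : ℕ) : ℕ :=
  ∑ E ∈ (internalEdges t).powerset.filter (fun E => E.card = s ∧ kappa t E = k),
    NEdges t E

end RTree

end

/-! Since both children of `v` are internal, an edge set `E` with `κ(v, E) = 0` must cut both
edges below `v`. Such `E` are therefore exactly the unions of these two edges with arbitrary cuts
`E₁ ⊆ E̊(T_{v₁})`, `E₂ ⊆ E̊(T_{v₂})`, and `|E| = |E₁| + |E₂| + 2`. The components of `T_v - E` are
the isolated vertex `v`, contributing `β(0) = 1`, and the components of `T_{v₁} - E₁` and
`T_{v₂} - E₂`, so `N_E(T_v) = N_{E₁}(T_{v₁}) · N_{E₂}(T_{v₂})`. Summing `R(vᵢ, sᵢ, kᵢ)` over `kᵢ`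
just forgets `κ`, and the sum over pairs `(E₁, E₂)` splits according to `|E₁|`. -/

open Finset

theorem Finset.sum_filter_add_eq_sum_range_mul {ι κ M : Type*} [CommSemiring M]
    (A : Finset ι) (B : Finset κ) (u : ι → ℕ) (v : κ → ℕ) (f : ι → M) (g : κ → M) (d s : ℕ) :
    ∑ q ∈ (A ×ˢ B).filter (fun q => u q.1 + v q.2 + d = s), f q.1 * g q.2 =
      ∑ i ∈ range (s + 1 - d),
        (∑ a ∈ A.filter (fun a => u a = i), f a) *
          ∑ b ∈ B.filter (fun b => v b = s - d - i), g b := by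
  rw [← sum_fiberwise_of_maps_to (g := fun q => u q.1) (t := range (s + 1 - d))
    (fun q hq => by simp only [mem_filter] at hq; simp only [mem_range]; omega)]
  refine sum_congr rfl fun i hi => ?_
  have hfiber : ((A ×ˢ B).filter (fun q => u q.1 + v q.2 + d = s)).filter (fun q => u q.1 = i) =
      A.filter (fun a => u a = i) ×ˢ B.filter (fun b => v b = s - d - i) := by
    ext q
    simp only [mem_filter, mem_product, mem_range] at hi ⊢
    constructor
    · rintro ⟨⟨⟨ha, hb⟩, hs⟩, rfl⟩
      exact ⟨⟨ha, rfl⟩, hb, by omega⟩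
    · rintro ⟨⟨ha, rfl⟩, hb, hv⟩
      exact ⟨⟨⟨ha, hb⟩, by omega⟩, rfl⟩
  rw [hfiber, sum_product, sum_mul_sum]

namespace RTree

variable {α : Type} {l r : RTree α}

lemma nil_mem_positions (t : RTree α) : [] ∈ t.positions := by
  cases t <;> simp [positions]

lemma cons_mem_positions_node {b : Bool} {p : List Bool} :
    b :: p ∈ (node l r).positions ↔ p ∈ (if b then r else l).positions := by
  cases b <;> simp [positions]

lemma nil_notMem_internalEdges (t : RTree α) : [] ∉ t.internalEdges := by
  simp [internalEdges]

lemma cons_mem_internalEdges_node {b : Bool} {q : List Bool} :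
    b :: q ∈ (node l r).internalEdges ↔
      (q = [] ∧ (if b then r else l).isNode) ∨ q ∈ (if b then r else l).internalEdges := by
  have hsub : (node l r).subtreeAt (b :: q) = (if b then r else l).subtreeAt q := rfl
  simp only [internalEdges, mem_filter, cons_mem_positions_node, hsub]
  cases q <;> simp [subtreeAt, nil_mem_positions]

lemma nonempty_of_mem_components {t : RTree α} {E C : Finset (List Bool)}
    (hC : C ∈ t.components E) : C.Nonempty := by
  obtain ⟨p, hp, rfl⟩ := mem_image.1 hC
  exact ⟨p, mem_filter.2 ⟨hp, .refl⟩⟩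

section Forest

variable {E F : Finset (List Bool)} {b : Bool}

lemma not_stepRel_nil (h₀ : [false] ∈ E) (h₁ : [true] ∈ E) (x : List Bool) :
    ¬ stepRel E [] x := by
  rintro (⟨-, h, -⟩ | ⟨hx, hne, hmem⟩)
  · exact h rfl
  · match x, hx with
    | [false], _ => exact hmem h₀
    | [true], _ => exact hmem h₁
    | _ :: _ :: _, hx => simp at hx

lemma stepRel_cons_iff (hb : [b] ∈ E) (hE : ∀ q ≠ [], b :: q ∈ E ↔ q ∈ F) {p x : List Bool} :
    stepRel E (b :: p) x ↔ ∃ q, x = b :: q ∧ stepRel F p q := by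
  constructor
  · rintro (⟨rfl, -, hpE⟩ | ⟨hx, hne, hxE⟩)
    · have hp : p ≠ [] := by rintro rfl; exact hpE hb
      exact ⟨p.dropLast, List.dropLast_cons_of_ne_nil hp,
        .inl ⟨rfl, hp, fun h => hpE ((hE p hp).2 h)⟩⟩
    · obtain ⟨c, q, rfl⟩ := List.exists_cons_of_ne_nil hne
      have hq : q ≠ [] := by rintro rfl; simp at hx
      rw [List.dropLast_cons_of_ne_nil hq, List.cons_eq_cons] at hx
      obtain ⟨rfl, rfl⟩ := hx
      exact ⟨q, rfl, .inr ⟨rfl, hq, fun h => hxE ((hE q hq).2 h)⟩⟩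
  · rintro ⟨q, rfl, ⟨rfl, hp, hpF⟩ | ⟨rfl, hq, hqF⟩⟩
    · exact .inl ⟨(List.dropLast_cons_of_ne_nil hp).symm, List.cons_ne_nil _ _,
        fun h => hpF ((hE p hp).1 h)⟩
    · exact .inr ⟨(List.dropLast_cons_of_ne_nil hq).symm, List.cons_ne_nil _ _,
        fun h => hqF ((hE q hq).1 h)⟩

lemma reflTransGen_stepRel_cons_iff (hb : [b] ∈ E) (hE : ∀ q ≠ [], b :: q ∈ E ↔ q ∈ F)
    {p x : List Bool} :
    Relation.ReflTransGen (stepRel E) (b :: p) x ↔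
      ∃ q, x = b :: q ∧ Relation.ReflTransGen (stepRel F) p q := by
  constructor
  · intro h
    induction h with
    | refl => exact ⟨p, rfl, .refl⟩
    | tail _ hstep ih =>
      obtain ⟨q, rfl, hq⟩ := ih
      obtain ⟨q', rfl, hs⟩ := (stepRel_cons_iff hb hE).1 hstep
      exact ⟨q', rfl, hq.tail hs⟩
  · rintro ⟨q, rfl, h⟩
    exact h.lift (List.cons b) fun _ _ hs => (stepRel_cons_iff hb hE).2 ⟨_, rfl, hs⟩

lemma component_node_nil (h₀ : [false] ∈ E) (h₁ : [true] ∈ E) :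
    (node l r).component E [] = {[]} := by
  ext q
  simp only [component, mem_filter, mem_singleton]
  constructor
  · rintro ⟨-, h⟩
    induction h with
    | refl => rfl
    | tail _ hstep ih => subst ih; exact absurd hstep (not_stepRel_nil h₀ h₁ _)
  · rintro rfl
    exact ⟨nil_mem_positions _, .refl⟩

lemma component_node_cons (hb : [b] ∈ E) (hE : ∀ q ≠ [], b :: q ∈ E ↔ q ∈ F) (p : List Bool) :
    (node l r).component E (b :: p) = ((if b then r else l).component F p).image (List.cons b) := by
  ext x
  simp only [component, mem_filter, mem_image, reflTransGen_stepRel_cons_iff hb hE]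
  constructor
  · rintro ⟨hx, q, rfl, hq⟩
    exact ⟨q, ⟨cons_mem_positions_node.1 hx, hq⟩, rfl⟩
  · rintro ⟨q, ⟨hq, hpq⟩, rfl⟩
    exact ⟨cons_mem_positions_node.2 hq, q, rfl, hpq⟩

end Forest

lemma beta_zero : beta 0 = 1 := rfl

lemma nil_notMem_of_subset_internalEdges {t : RTree α} {E : Finset (List Bool)}
    (h : E ⊆ t.internalEdges) : [] ∉ E :=
  fun h₀ => nil_notMem_internalEdges t (h h₀)

lemma compEdgeCount_singleton_nil (t : RTree α) (E : Finset (List Bool)) :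
    t.compEdgeCount E {[]} = 0 := by
  simp only [compEdgeCount, card_eq_zero, filter_eq_empty_iff, mem_singleton]
  rintro _ hp ⟨-, rfl⟩
  exact nil_notMem_internalEdges t hp

-- The shifted copies of `[]` are the two edges directly below the node.
def nodeCut (E₁ E₂ : Finset (List Bool)) : Finset (List Bool) :=
  (insert [] E₁).image (List.cons false) ∪ (insert [] E₂).image (List.cons true)

noncomputable def childCut (b : Bool) (c : RTree α) (E : Finset (List Bool)) : Finset (List Bool) :=
  c.internalEdges.filter (fun q => b :: q ∈ E)

lemma childCut_subset {b : Bool} {c : RTree α} {E : Finset (List Bool)} :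
    childCut b c E ⊆ c.internalEdges :=
  filter_subset _ _

section NodeCut

variable {E₁ E₂ : Finset (List Bool)}

lemma nil_notMem_nodeCut : [] ∉ nodeCut E₁ E₂ := by
  simp [nodeCut]

lemma cons_mem_nodeCut {b : Bool} {q : List Bool} :
    b :: q ∈ nodeCut E₁ E₂ ↔ q = [] ∨ q ∈ (if b then E₂ else E₁) := by
  cases b <;> simp [nodeCut]

lemma singleton_mem_nodeCut (b : Bool) : [b] ∈ nodeCut E₁ E₂ :=
  cons_mem_nodeCut.2 (.inl rfl)

lemma cons_mem_nodeCut_of_ne_nil (b : Bool) :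
    ∀ q ≠ [], b :: q ∈ nodeCut E₁ E₂ ↔ q ∈ (if b then E₂ else E₁) :=
  fun _ hq => cons_mem_nodeCut.trans (or_iff_right hq)

lemma card_nodeCut (h₁ : [] ∉ E₁) (h₂ : [] ∉ E₂) : #(nodeCut E₁ E₂) = #E₁ + #E₂ + 2 := by
  have hdisj : Disjoint ((insert [] E₁).image (List.cons false))
      ((insert [] E₂).image (List.cons true)) := by
    simp [disjoint_left]
  rw [nodeCut, card_union_of_disjoint hdisj, card_image_of_injective _ List.cons_injective,
    card_image_of_injective _ List.cons_injective, card_insert_of_notMem h₁,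
    card_insert_of_notMem h₂]
  ring

lemma nodeCut_subset_internalEdges (hl : l.isNode) (hr : r.isNode)
    (h₁ : E₁ ⊆ l.internalEdges) (h₂ : E₂ ⊆ r.internalEdges) :
    nodeCut E₁ E₂ ⊆ (node l r).internalEdges := by
  rintro (_ | ⟨b, q⟩) hx
  · exact absurd hx nil_notMem_nodeCut
  rw [cons_mem_internalEdges_node]
  rcases cons_mem_nodeCut.1 hx with rfl | hq
  · exact .inl ⟨rfl, by cases b; exacts [hl, hr]⟩
  · exact .inr (by cases b; exacts [h₁ hq, h₂ hq])

lemma childCut_nodeCut (b : Bool) (c : RTree α) :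
    childCut b c (nodeCut E₁ E₂) = c.internalEdges ∩ (if b then E₂ else E₁) := by
  ext q
  rcases eq_or_ne q [] with rfl | hq
  · simp [childCut, nil_notMem_internalEdges]
  · simp [childCut, cons_mem_nodeCut_of_ne_nil b q hq]

lemma components_node_nodeCut :
    (node l r).components (nodeCut E₁ E₂) =
      insert {[]} ((l.components E₁).image (image (List.cons false)) ∪
        (r.components E₂).image (image (List.cons true))) := by
  rw [components, positions, image_insert, image_union,
    component_node_nil (singleton_mem_nodeCut false) (singleton_mem_nodeCut true),
    components, components, image_image, image_image, image_image, image_image]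
  congr 2 <;> refine image_congr fun p _ => ?_
  · exact component_node_cons (singleton_mem_nodeCut false) (cons_mem_nodeCut_of_ne_nil false) p
  · exact component_node_cons (singleton_mem_nodeCut true) (cons_mem_nodeCut_of_ne_nil true) p

lemma compEdgeCount_node_nodeCut_image (b : Bool) (C : Finset (List Bool)) :
    (node l r).compEdgeCount (nodeCut E₁ E₂) (C.image (List.cons b)) =
      (if b then r else l).compEdgeCount (if b then E₂ else E₁) C := by
  suffices h : (node l r).internalEdges.filter
      (fun p => p ∉ nodeCut E₁ E₂ ∧ p ∈ C.image (List.cons b)) =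
      ((if b then r else l).internalEdges.filter
        (fun q => q ∉ (if b then E₂ else E₁) ∧ q ∈ C)).image (List.cons b) by
    rw [compEdgeCount, compEdgeCount, h, card_image_of_injective _ List.cons_injective]
  ext x
  simp only [mem_filter, mem_image]
  constructor
  · rintro ⟨hx, hxE, q, hqC, rfl⟩
    have hq := (cons_mem_internalEdges_node.1 hx).resolve_left
      fun ⟨hq, _⟩ => hxE (hq ▸ singleton_mem_nodeCut b)
    have hq₀ : q ≠ [] := by rintro rfl; exact nil_notMem_internalEdges _ hq
    exact ⟨q, ⟨hq, mt (cons_mem_nodeCut_of_ne_nil b q hq₀).2 hxE, hqC⟩, rfl⟩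
  · rintro ⟨q, ⟨hq, hqE, hqC⟩, rfl⟩
    have hq₀ : q ≠ [] := by rintro rfl; exact nil_notMem_internalEdges _ hq
    exact ⟨cons_mem_internalEdges_node.2 (.inr hq), mt (cons_mem_nodeCut_of_ne_nil b q hq₀).1 hqE,
      q, hqC, rfl⟩

lemma NEdges_node_nodeCut : (node l r).NEdges (nodeCut E₁ E₂) = l.NEdges E₁ * r.NEdges E₂ := by
  have hroot : {[]} ∉ (l.components E₁).image (image (List.cons false)) ∪
      (r.components E₂).image (image (List.cons true)) := by
    simp only [mem_union, mem_image]
    rintro (⟨C, -, hC⟩ | ⟨C, -, hC⟩) <;>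
      simpa using congrArg (([] : List Bool) ∈ ·) hC
  have hdisj : Disjoint ((l.components E₁).image (image (List.cons false)))
      ((r.components E₂).image (image (List.cons true))) := by
    simp only [disjoint_left, mem_image]
    rintro _ ⟨C, hC, rfl⟩ ⟨C', -, hCC'⟩
    obtain ⟨p, hp⟩ := nonempty_of_mem_components hC
    simpa using (congrArg (false :: p ∈ ·) hCC').mpr (mem_image_of_mem (List.cons false) hp)
  have himage := fun b => image_injective (β := List Bool) (List.cons_injective (a := b))
  rw [NEdges, components_node_nodeCut, prod_insert hroot, prod_union hdisj,
    compEdgeCount_singleton_nil, prod_image fun _ _ _ _ h => himage false h,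
    prod_image fun _ _ _ _ h => himage true h]
  simp only [compEdgeCount_node_nodeCut_image]
  rw [beta_zero, one_mul]
  rfl

lemma kappa_node_nodeCut : (node l r).kappa (nodeCut E₁ E₂) = 0 := by
  rw [kappa, component_node_nil (singleton_mem_nodeCut false) (singleton_mem_nodeCut true),
    compEdgeCount_singleton_nil]

end NodeCut

section Decomposition

variable {E : Finset (List Bool)}

lemma singleton_mem_of_kappa_node_eq_zero {b : Bool} (hb : (if b then r else l).isNode)
    (hk : (node l r).kappa E = 0) : [b] ∈ E := by
  by_contra h
  have hcomp : [b] ∈ (node l r).component E [] :=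
    mem_filter.2 ⟨cons_mem_positions_node.2 (nil_mem_positions _),
      .single (.inr ⟨rfl, List.cons_ne_nil _ _, h⟩)⟩
  rw [kappa, compEdgeCount, card_eq_zero, filter_eq_empty_iff] at hk
  exact hk (cons_mem_internalEdges_node.2 (.inl ⟨rfl, hb⟩)) ⟨h, hcomp⟩

lemma nodeCut_childCut (hE : E ⊆ (node l r).internalEdges) (h₀ : [false] ∈ E)
    (h₁ : [true] ∈ E) : nodeCut (childCut false l E) (childCut true r E) = E := by
  ext (_ | ⟨b, q⟩)
  · exact iff_of_false nil_notMem_nodeCut (nil_notMem_of_subset_internalEdges hE)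
  rcases eq_or_ne q [] with rfl | hq
  · cases b <;> simp [singleton_mem_nodeCut, h₀, h₁]
  have hchild : b :: q ∈ E → q ∈ (if b then r else l).internalEdges :=
    fun h => (cons_mem_internalEdges_node.1 (hE h)).resolve_left fun h' => hq h'.1
  rw [cons_mem_nodeCut_of_ne_nil b q hq]
  cases b <;> simpa [childCut] using hchild

end Decomposition

theorem R_node_zero_eq_sum_mul_NEdges (hl : l.isNode) (hr : r.isNode) (s : ℕ) :
    (node l r).R s 0 = ∑ q ∈ (l.internalEdges.powerset ×ˢ r.internalEdges.powerset).filter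
        (fun q => #q.1 + #q.2 + 2 = s), l.NEdges q.1 * r.NEdges q.2 := by
  have hsplit {E} (hE : E ⊆ (node l r).internalEdges) (hk : (node l r).kappa E = 0) :
      nodeCut (childCut false l E) (childCut true r E) = E :=
    nodeCut_childCut hE (singleton_mem_of_kappa_node_eq_zero hl hk)
      (singleton_mem_of_kappa_node_eq_zero hr hk)
  have hcard (E₁ E₂ : Finset (List Bool)) (h₁ : E₁ ⊆ l.internalEdges)
      (h₂ : E₂ ⊆ r.internalEdges) : #(nodeCut E₁ E₂) = #E₁ + #E₂ + 2 :=
    card_nodeCut (nil_notMem_of_subset_internalEdges h₁) (nil_notMem_of_subset_internalEdges h₂)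
  refine sum_nbij' (fun E => (childCut false l E, childCut true r E)) (fun q => nodeCut q.1 q.2)
    ?_ ?_ ?_ ?_ ?_ <;> simp only [mem_filter, mem_powerset, mem_product, and_imp, Prod.forall]
  · intro E hE hs hk
    refine ⟨⟨childCut_subset, childCut_subset⟩, ?_⟩
    rw [← hs, ← hcard _ _ childCut_subset childCut_subset, hsplit hE hk]
  · intro E₁ E₂ h₁ h₂ hs
    exact ⟨nodeCut_subset_internalEdges hl hr h₁ h₂, hcard E₁ E₂ h₁ h₂ ▸ hs, kappa_node_nodeCut⟩
  · exact fun E hE _ hk => hsplit hE hk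
  · intro E₁ E₂ h₁ h₂ _
    simp [childCut_nodeCut, inter_eq_right.2 h₁, inter_eq_right.2 h₂]
  · intro E hE _ hk
    rw [← NEdges_node_nodeCut, hsplit hE hk]

lemma sum_range_R_eq_sum_NEdges (t : RTree α) (s : ℕ) :
    ∑ k ∈ range (#t.internalEdges + 1), t.R s k =
      ∑ E ∈ t.internalEdges.powerset.filter (fun E => #E = s), t.NEdges E := by
  rw [← sum_fiberwise_of_maps_to (g := t.kappa) (t := range (#t.internalEdges + 1))
    (fun E _ => mem_range.2 (Nat.lt_succ_of_le (card_le_card (filter_subset _ _))))]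
  simp only [R, filter_filter]

end RTree

open RTree

theorem R_rec_two_internal_children_zero_general (n : ℕ) (tv v₁ v₂ : RTree (Fin (n - 1)))
    (htv : tv = RTree.node v₁ v₂)
    (h₁ : v₁.isNode) (h₂ : v₂.isNode)
    (s : ℕ) :
    R tv s 0 =
      ∑ s₁ ∈ Finset.range (s - 1),
        (∑ k₁ ∈ Finset.range ((internalEdges v₁).card + 1), R v₁ s₁ k₁) *
          (∑ k₂ ∈ Finset.range ((internalEdges v₂).card + 1), R v₂ (s - 2 - s₁) k₂) := by
  subst htv
  simp only [sum_range_R_eq_sum_NEdges]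
  rw [R_node_zero_eq_sum_mul_NEdges h₁ h₂, sum_filter_add_eq_sum_range_mul]
  -- `s + 1 - 2` and `s - 1` agree definitionally
  rfl

/-- Let `T ∈ BPT(n)`, rooted as described, and let `v` be an internal
vertex with two internal children `v₁` and `v₂`.  Then for every `s ≥ 1`:
`R(v,s,0) = ∑_{s₁=0}^{s-2} (∑_{k₁ ≥ 0} R(v₁,s₁,k₁)) · (∑_{k₂ ≥ 0} R(v₂,s-2-s₁,k₂))`,
where an empty sum equals zero.  (The inner sums over `k₁, k₂ ≥ 0` are finite, since
`R(vᵢ,·,kᵢ) = 0` for `kᵢ > n_{vᵢ} = |E̊(T_{vᵢ})|`.) -/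
theorem R_rec_two_internal_children_zero (n : ℕ) (hn : 3 ≤ n) (t : RTree (Fin (n - 1)))
    (hnodup : t.labels.Nodup) (hcard : Multiset.card t.labels = n - 1)
    (p : List Bool) (tv v₁ v₂ : RTree (Fin (n - 1)))
    (hp : t.subtreeAt p = some tv) (htv : tv = RTree.node v₁ v₂)
    (h₁ : v₁.isNode) (h₂ : v₂.isNode)
    (s : ℕ) (hs : 1 ≤ s) :
    R tv s 0 =
      ∑ s₁ ∈ Finset.range (s - 1),
        (∑ k₁ ∈ Finset.range ((internalEdges v₁).card + 1), R v₁ s₁ k₁) *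
          (∑ k₂ ∈ Finset.range ((internalEdges v₂).card + 1), R v₂ (s - 2 - s₁) k₂) :=
  R_rec_two_internal_children_zero_general n tv v₁ v₂ htv h₁ h₂ s
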